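/- In the setting of the previous statement, let w : ℝ^d → ℝ be bounded measurable. Then the conditional expectation h_t(x) := E[w(X₀) | X_t = x] (for X_t := μ_t X₀ + σ_t ε) admits the low-dimensional representation h_t(x) = h̄_t(Pᵀ x), where h̄_t(x̄) := E[w(P X̄₀) | X̄_t = x̄] and X̄_t := μ_t X̄₀ + σ_t ε̄. -/
import Mathlib

open MeasureTheory Real Matrix

/-- The `d`-dimensional Gaussian density `φ_d(x; m, σ² I_d)`. -/
noncomputable def gaussKernel (d : ℕ) (σ2 : ℝ) (x m : Fin d → ℝ) : ℝ :=
  (2 * Real.pi * σ2) ^ (-(d : ℝ) / 2) *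
    Real.exp (-(∑ i, (x i - m i) ^ 2) / (2 * σ2))

/-- Low-dimensional representation of Doob's `h`-function: if `X₀ = P X̄₀` with `P`
having orthonormal columns and `w` bounded measurable, then the Bayes posterior
expectation `h_t(x) = E[w(X₀) | X_t = x]` satisfies `h_t(x) = h̄_t(Pᵀx)`, where
`h̄_t(x̄) = E[w(P X̄₀) | X̄_t = x̄]` in the latent space `ℝ^{d*}`. -/
theorem doob_h_function_low_dimensional_representation
    {d ds : ℕ} (P : Matrix (Fin d) (Fin ds) ℝ) (hP : P.transpose * P = 1)
    (μt σt : ℝ) (hμt : 0 < μt) (hσt : 0 < σt)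
    (p0bar : (Fin ds → ℝ) → ℝ) (hmeas : Measurable p0bar)
    (hnonneg : ∀ x, 0 ≤ p0bar x) (hint : Integrable p0bar)
    (hone : ∫ x, p0bar x = 1)
    (w : (Fin d → ℝ) → ℝ) (hw_meas : Measurable w) (hw_bdd : ∃ C, ∀ x, |w x| ≤ C)
    (x : Fin d → ℝ) :
    (∫ x0, w (P.mulVec x0) * gaussKernel d (σt ^ 2) x (μt • P.mulVec x0)
        * p0bar x0) /
      (∫ x0, gaussKernel d (σt ^ 2) x (μt • P.mulVec x0) * p0bar x0)
    = (∫ x0, w (P.mulVec x0)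
          * gaussKernel ds (σt ^ 2) (P.transpose.mulVec x) (μt • x0) * p0bar x0) /
        (∫ x0, gaussKernel ds (σt ^ 2) (P.transpose.mulVec x) (μt • x0)
          * p0bar x0) := by
  have hσ2 : (0:ℝ) < σt ^ 2 := by positivity
  have hbase : (0:ℝ) < 2 * Real.pi * σt ^ 2 := by positivity
  -- dot product transport
  have hdp : ∀ (v : Fin d → ℝ) (u : Fin ds → ℝ),
      v ⬝ᵥ P.mulVec u = P.transpose.mulVec v ⬝ᵥ u := by
    intro v u
    rw [Matrix.dotProduct_mulVec, ← Matrix.mulVec_transpose]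
  have hnorm : ∀ x0 : Fin ds → ℝ, ∑ i, (P.mulVec x0 i) ^ 2 = ∑ j, x0 j ^ 2 := by
    intro x0
    have : P.mulVec x0 ⬝ᵥ P.mulVec x0 = x0 ⬝ᵥ x0 := by
      rw [hdp, Matrix.mulVec_mulVec, hP, Matrix.one_mulVec]
    simpa [dotProduct, sq] using this
  have hdot : ∀ x0 : Fin ds → ℝ,
      ∑ i, x i * P.mulVec x0 i = ∑ j, P.transpose.mulVec x j * x0 j := by
    intro x0; simpa [dotProduct] using hdp x x0
  -- the constant factor
  set D : ℝ := (∑ i, x i ^ 2) - ∑ j, (P.transpose.mulVec x j) ^ 2 with hD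
  set c : ℝ := (2 * Real.pi * σt ^ 2) ^ ((-(d : ℝ) / 2) - (-(ds : ℝ) / 2)) *
      Real.exp (-D / (2 * σt ^ 2)) with hc
  have hcpos : 0 < c := by
    apply mul_pos (Real.rpow_pos_of_pos hbase _) (Real.exp_pos _)
  -- kernel factorization
  have hker : ∀ x0 : Fin ds → ℝ,
      gaussKernel d (σt ^ 2) x (μt • P.mulVec x0)
        = c * gaussKernel ds (σt ^ 2) (P.transpose.mulVec x) (μt • x0) := by
    intro x0
    have hsum : ∑ i, (x i - (μt • P.mulVec x0) i) ^ 2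
        = (∑ j, ((P.transpose.mulVec x) j - (μt • x0) j) ^ 2) + D := by
      have e1 : ∀ i, (x i - (μt • P.mulVec x0) i) ^ 2
          = x i ^ 2 - 2 * μt * (x i * P.mulVec x0 i) + μt ^ 2 * (P.mulVec x0 i) ^ 2 := by
        intro i; simp only [Pi.smul_apply, smul_eq_mul]; ring
      have e2 : ∀ j, ((P.transpose.mulVec x) j - (μt • x0) j) ^ 2
          = (P.transpose.mulVec x j) ^ 2 - 2 * μt * (P.transpose.mulVec x j * x0 j)
            + μt ^ 2 * x0 j ^ 2 := by
        intro j; simp only [Pi.smul_apply, smul_eq_mul]; ring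
      simp_rw [e1, e2, Finset.sum_add_distrib, Finset.sum_sub_distrib,
        ← Finset.mul_sum, hnorm, hdot, hD]
      ring
    have hpow : (2 * Real.pi * σt ^ 2) ^ (-(d : ℝ) / 2)
        = (2 * Real.pi * σt ^ 2) ^ ((-(d : ℝ) / 2) - (-(ds : ℝ) / 2)) *
          (2 * Real.pi * σt ^ 2) ^ (-(ds : ℝ) / 2) := by
      rw [← Real.rpow_add hbase]; ring_nf
    have hexp : Real.exp (-(∑ i, (x i - (μt • P.mulVec x0) i) ^ 2) / (2 * σt ^ 2))
        = Real.exp (-D / (2 * σt ^ 2)) *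
          Real.exp (-(∑ j, ((P.transpose.mulVec x) j - (μt • x0) j) ^ 2) / (2 * σt ^ 2)) := by
      rw [hsum, ← Real.exp_add]
      congr 1
      field_simp
      ring
    unfold gaussKernel
    rw [hpow, hexp, hc]
    ring
  simp_rw [hker]
  have h1 : ∀ x0 : Fin ds → ℝ,
      w (P.mulVec x0) * (c * gaussKernel ds (σt ^ 2) (P.transpose.mulVec x) (μt • x0))
        * p0bar x0
      = c * (w (P.mulVec x0) * gaussKernel ds (σt ^ 2) (P.transpose.mulVec x) (μt • x0)
          * p0bar x0) := by intro x0; ring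
  have h2 : ∀ x0 : Fin ds → ℝ,
      c * gaussKernel ds (σt ^ 2) (P.transpose.mulVec x) (μt • x0) * p0bar x0
      = c * (gaussKernel ds (σt ^ 2) (P.transpose.mulVec x) (μt • x0) * p0bar x0) := by
    intro x0; ring
  simp_rw [h1, h2, MeasureTheory.integral_const_mul]
  rw [mul_div_mul_left _ _ (ne_of_gt hcpos)]
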